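/- arXiv:1210.5988 — 3 statements merged into one kernel-verified Lean document; each statement's English description precedes it below -/
import Mathlib

section
/- Let H be a Hilbert space and let E¹_μ and E²_μ (μ ∈ ℝ) be two generalized spectral families on H (i.e. monotone nondecreasing families of bounded self-adjoint operators with 0 ≤ E^k_μ ≤ I, E^k_{-∞} = 0). Define R_k(λ) = ∫_ℝ dE^k_μ/(μ−λ) for nonreal λ. If ‖R₁(iτ) − R₂(iτ)‖ = o(1/τ) as τ → +∞, then E¹_∞ = E²_∞, where E^k_∞ = strong limit of E^k_μ as μ → +∞. -/
open MeasureTheory Filter Topology ContinuousLinearMap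
open scoped ComplexInnerProductSpace

/-!
By dominated convergence, `iτ ∫ dm(μ) / (μ - iτ) → -m(ℝ)` for every finite measure `m` on `ℝ`.
For `m = ν k f` the total mass is `⟪f, E^k_∞ f⟫`, while the hypothesis forces the difference of
`iτ ⟪f, R_k(iτ) f⟫` for `k = 0, 1` to tend to `0`. So the strong limits, being symmetric operators
with the same real quadratic form, coincide by polarization.
-/

section Symmetric

variable {𝕜 E : Type*} [RCLike 𝕜] [NormedAddCommGroup E] [InnerProductSpace 𝕜 E]

theorem LinearMap.IsSymmetric.of_tendsto {ι : Type*} {l : Filter ι} [l.NeBot]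
    {T : ι → E →L[𝕜] E} {S : E →L[𝕜] E} (hT : ∀ i, (T i : E →ₗ[𝕜] E).IsSymmetric)
    (hS : ∀ x, Tendsto (fun i => T i x) l (𝓝 (S x))) : (S : E →ₗ[𝕜] E).IsSymmetric :=
  fun x y => tendsto_nhds_unique ((hS x).inner tendsto_const_nhds)
    ((tendsto_const_nhds.inner (hS y)).congr fun i => (hT i x y).symm)

theorem LinearMap.IsSymmetric.eq_of_re_inner_self_eq {T S : E →L[𝕜] E}
    (hT : (T : E →ₗ[𝕜] E).IsSymmetric) (hS : (S : E →ₗ[𝕜] E).IsSymmetric)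
    (h : ∀ x, RCLike.re (inner 𝕜 x (T x)) = RCLike.re (inner 𝕜 x (S x))) : T = S := by
  have hD : ((T - S : E →L[𝕜] E) : E →ₗ[𝕜] E).IsSymmetric := by
    rw [toLinearMap_sub]; exact hT.sub hS
  rw [← sub_eq_zero, ← coe_inj, toLinearMap_zero, ← hD.inner_map_self_eq_zero]
  intro x
  change inner 𝕜 ((T - S) x) x = 0
  rw [← hD.coe_reApplyInnerSelf_apply, reApplyInnerSelf_apply, ← inner_conj_symm,
    RCLike.conj_re, _root_.sub_apply, inner_sub_right, map_sub, h, sub_self, RCLike.ofReal_zero]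

end Symmetric

open Complex

noncomputable def cauchyTransform (m : Measure ℝ) (z : ℂ) : ℂ := ∫ μ : ℝ, ((μ : ℂ) - z)⁻¹ ∂m

lemma norm_I_mul_mul_inv_sub_le_one (τ μ : ℝ) : ‖I * τ * ((μ : ℂ) - I * τ)⁻¹‖ ≤ 1 := by
  rw [norm_mul, norm_inv, norm_mul, norm_I, one_mul, norm_real, Real.norm_eq_abs]
  rcases eq_or_ne ((μ : ℂ) - I * τ) 0 with h | h
  · simp [h]
  rw [mul_inv_le_iff₀ (norm_pos_iff.mpr h), one_mul]
  simpa using abs_im_le_norm ((μ : ℂ) - I * τ)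

lemma tendsto_I_mul_mul_inv_sub_atTop (μ : ℝ) :
    Tendsto (fun τ : ℝ => I * τ * ((μ : ℂ) - I * τ)⁻¹) atTop (𝓝 (-1)) := by
  have h : Tendsto (fun τ : ℝ => 1 + I * ((μ / τ : ℝ) : ℂ)) atTop (𝓝 1) := by
    simpa using (((continuous_ofReal.tendsto 0).comp
      (tendsto_const_nhds.div_atTop tendsto_id)).const_mul I).const_add 1
  have h' := (h.inv₀ one_ne_zero).neg
  rw [inv_one] at h'
  refine h'.congr' ?_
  filter_upwards [eventually_gt_atTop 0] with τ hτ
  have hτ' : (τ : ℂ) ≠ 0 := ofReal_ne_zero.mpr hτ.ne'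
  have hden : (μ : ℂ) - I * τ ≠ 0 := fun h0 => by simpa [hτ.ne'] using congrArg im h0
  have hden' : (τ : ℂ) + I * μ ≠ 0 := fun h0 => by simpa [hτ.ne'] using congrArg re h0
  push_cast
  field_simp
  linear_combination -(μ : ℂ) * I_sq

theorem tendsto_I_mul_cauchyTransform_atTop (m : Measure ℝ) [IsFiniteMeasure m] :
    Tendsto (fun τ : ℝ => I * τ * cauchyTransform m (I * τ)) atTop
      (𝓝 (-(m.real Set.univ : ℂ))) := by
  have h := tendsto_integral_filter_of_dominated_convergence (μ := m) (l := atTop)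
    (F := fun (τ μ : ℝ) => I * τ * ((μ : ℂ) - I * τ)⁻¹) (bound := fun _ => 1)
    (Eventually.of_forall fun τ => (by fun_prop : Measurable fun μ : ℝ =>
      I * τ * ((μ : ℂ) - I * τ)⁻¹).aestronglyMeasurable)
    (Eventually.of_forall fun τ => ae_of_all _ fun μ => norm_I_mul_mul_inv_sub_le_one τ μ)
    (integrable_const 1) (ae_of_all _ tendsto_I_mul_mul_inv_sub_atTop)
  simpa [cauchyTransform, integral_const_mul] using h

theorem tendsto_I_mul_inner_self_of_tendsto_mul_norm {H : Type*} [NormedAddCommGroup H]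
    [InnerProductSpace ℂ H] {A : ℝ → H →L[ℂ] H}
    (hA : Tendsto (fun τ => τ * ‖A τ‖) atTop (𝓝 0)) (f : H) :
    Tendsto (fun τ : ℝ => I * τ * ⟪f, A τ f⟫) atTop (𝓝 0) := by
  refine squeeze_zero_norm' ?_ (by simpa using hA.mul_const (‖f‖ * ‖f‖))
  filter_upwards [eventually_ge_atTop 0] with τ hτ
  calc ‖I * τ * ⟪f, A τ f⟫‖ = τ * ‖⟪f, A τ f⟫‖ := by simp [abs_of_nonneg hτ]
    _ ≤ τ * (‖f‖ * (‖A τ‖ * ‖f‖)) := by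
      gcongr
      exact (norm_inner_le_norm _ _).trans (by gcongr; exact (A τ).le_opNorm f)
    _ = τ * ‖A τ‖ * (‖f‖ * ‖f‖) := by ring

theorem stmt_0_general
    {H : Type*} [NormedAddCommGroup H] [InnerProductSpace ℂ H]
    (E : Fin 2 → ℝ → H →L[ℂ] H)
    (hpos : ∀ k μ, (E k μ).IsPositive)
    (ν : Fin 2 → H → Measure ℝ)
    (hνfin : ∀ k f, IsFiniteMeasure (ν k f))
    (hν : ∀ k (f : H) (μ : ℝ), ((ν k f) (Set.Iic μ)).toReal = (⟪f, E k μ f⟫).re)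
    (R : Fin 2 → ℂ → H →L[ℂ] H)
    (hR : ∀ k (l : ℂ), l.im ≠ 0 → ∀ f : H,
      ⟪f, R k l f⟫ = ∫ μ : ℝ, ((μ : ℂ) - l)⁻¹ ∂(ν k f))
    (hsmall : ∀ ε > (0:ℝ), ∃ T : ℝ, ∀ τ ≥ T,
      τ * ‖R 0 (Complex.I * (τ : ℂ)) - R 1 (Complex.I * (τ : ℂ))‖ ≤ ε)
    (Einf : Fin 2 → H →L[ℂ] H)
    (hEinf : ∀ k (f : H), Tendsto (fun μ => E k μ f) atTop (nhds (Einf k f))) :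
    Einf 0 = Einf 1 := by
  have hsymm k : (Einf k : H →ₗ[ℂ] H).IsSymmetric :=
    .of_tendsto (fun μ => (hpos k μ).isSymmetric) (hEinf k)
  have hmass k f : (ν k f).real Set.univ = (⟪f, Einf k f⟫).re := by
    have := hνfin k f
    refine tendsto_nhds_unique ?_
      ((continuous_re.tendsto _).comp (tendsto_const_nhds.inner (hEinf k f)))
    exact ((ENNReal.tendsto_toReal (measure_ne_top _ _)).comp
      (tendsto_measure_Iic_atTop _)).congr (hν k f)
  have hlim k f : Tendsto (fun τ : ℝ => I * τ * ⟪f, R k (I * τ) f⟫) atTop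
      (𝓝 (-((ν k f).real Set.univ : ℂ))) := by
    have := hνfin k f
    refine (tendsto_I_mul_cauchyTransform_atTop (ν k f)).congr' ?_
    filter_upwards [eventually_gt_atTop 0] with τ hτ
    rw [hR k _ (by simp [hτ.ne']) f, cauchyTransform]
  have hdiff : Tendsto (fun τ : ℝ => τ * ‖R 0 (I * τ) - R 1 (I * τ)‖) atTop (𝓝 0) := by
    refine tendsto_order.2 ⟨fun a ha => ?_, fun a ha => ?_⟩
    · filter_upwards [eventually_ge_atTop 0] with τ hτ
      exact ha.trans_le (by positivity)
    · obtain ⟨T, hT⟩ := hsmall (a / 2) (by positivity)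
      filter_upwards [eventually_ge_atTop T] with τ hτ
      exact (hT τ hτ).trans_lt (by linarith)
  refine (hsymm 0).eq_of_re_inner_self_eq (hsymm 1) fun f => ?_
  have hzero := tendsto_nhds_unique ((hlim 0 f).sub (hlim 1 f))
    ((tendsto_I_mul_inner_self_of_tendsto_mul_norm hdiff f).congr fun τ => by
      rw [_root_.sub_apply, inner_sub_right, mul_sub])
  rw [RCLike.re_to_complex, RCLike.re_to_complex, ← hmass, ← hmass]
  exact_mod_cast neg_inj.mp (sub_eq_zero.mp hzero)

/-- If two generalized spectral families have Cauchy transforms (generalized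
resolvents) whose difference is `o(1/τ)` along the imaginary axis, then their
strong limits at `+∞` coincide. -/
theorem stmt_0
    {H : Type*} [NormedAddCommGroup H] [InnerProductSpace ℂ H] [CompleteSpace H]
    (E : Fin 2 → ℝ → H →L[ℂ] H)
    (hpos : ∀ k μ, (E k μ).IsPositive)
    (hle1 : ∀ k μ, ((1 : H →L[ℂ] H) - E k μ).IsPositive)
    (hmono : ∀ k, ∀ μ₁ μ₂ : ℝ, μ₁ ≤ μ₂ → (E k μ₂ - E k μ₁).IsPositive)
    (hbot : ∀ k (f : H), Tendsto (fun μ => E k μ f) atBot (nhds 0))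
    (ν : Fin 2 → H → Measure ℝ)
    (hνfin : ∀ k f, IsFiniteMeasure (ν k f))
    (hν : ∀ k (f : H) (μ : ℝ), ((ν k f) (Set.Iic μ)).toReal = (⟪f, E k μ f⟫).re)
    (R : Fin 2 → ℂ → H →L[ℂ] H)
    (hR : ∀ k (l : ℂ), l.im ≠ 0 → ∀ f : H,
      ⟪f, R k l f⟫ = ∫ μ : ℝ, ((μ : ℂ) - l)⁻¹ ∂(ν k f))
    (hsmall : ∀ ε > (0:ℝ), ∃ T : ℝ, ∀ τ ≥ T,
      τ * ‖R 0 (Complex.I * (τ : ℂ)) - R 1 (Complex.I * (τ : ℂ))‖ ≤ ε)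
    (Einf : Fin 2 → H →L[ℂ] H)
    (hEinf : ∀ k (f : H), Tendsto (fun μ => E k μ f) atTop (nhds (Einf k f))) :
    Einf 0 = Einf 1 :=
  stmt_0_general E hpos ν hνfin hν R hR hsmall Einf hEinf
end

section
/- Let σ be a function of bounded variation on ℝ with values in ℝ (a signed Stieltjes measure of finite total variation). Suppose that for λ = iτ, τ → +∞, one has | −∫_Δ dσ(μ) + ∫_Δ μ dσ(μ)/(μ−λ) + ∫_{ℝ∖Δ} λ dσ(μ)/(μ−λ) | ≤ o(1) uniformly for all finite intervals Δ containing a fixed interval Δ(ε). Then ∫_ℝ dσ(μ) = 0. -/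
/-!
Since `μ / (μ - λ) - 1 = λ / (μ - λ)`, for each of the two measures the expression in the
hypothesis collapses, whatever the interval `Δ`, to the single integral `∫_ℝ λ dν(μ) / (μ - λ)`.
With `λ = iτ` the integrand is bounded by `1` and tends to `-1` pointwise as `τ → +∞`, so by
dominated convergence that integral tends to `-ν(ℝ)`. The hypothesis says the difference of the
two integrals tends to `0`, hence `ν₁(ℝ) = ν₂(ℝ)`.
-/

open MeasureTheory Filter Topology Complex

section Kernel

variable (μ τ : ℝ)

lemma abs_le_norm_ofReal_sub_I_mul_re : |μ| ≤ ‖(μ : ℂ) - I * τ‖ := by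
  simpa using Complex.abs_re_le_norm ((μ : ℂ) - I * τ)

lemma abs_le_norm_ofReal_sub_I_mul_im : |τ| ≤ ‖(μ : ℂ) - I * τ‖ := by
  simpa using Complex.abs_im_le_norm ((μ : ℂ) - I * τ)

lemma norm_I_mul_div_ofReal_sub_I_mul_le_one : ‖I * τ / ((μ : ℂ) - I * τ)‖ ≤ 1 := by
  rw [norm_div, norm_mul, norm_I, one_mul, norm_real, Real.norm_eq_abs]
  exact div_le_one_of_le₀ (abs_le_norm_ofReal_sub_I_mul_im μ τ) (norm_nonneg _)

variable {τ}

lemma norm_ofReal_div_ofReal_sub_I_mul_le (hτ : τ ≠ 0) :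
    ‖(μ : ℂ) / ((μ : ℂ) - I * τ)‖ ≤ |μ| / |τ| := by
  rw [norm_div, norm_real, Real.norm_eq_abs]
  exact div_le_div_of_nonneg_left (abs_nonneg μ) (abs_pos.mpr hτ)
    (abs_le_norm_ofReal_sub_I_mul_im μ τ)

lemma ofReal_div_ofReal_sub_I_mul (hτ : τ ≠ 0) :
    (μ : ℂ) / ((μ : ℂ) - I * τ) = 1 + I * τ / ((μ : ℂ) - I * τ) := by
  have hne : (μ : ℂ) - I * τ ≠ 0 := fun h => by
    simpa [hτ] using congrArg Complex.im h
  field_simp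
  ring

lemma tendsto_I_mul_div_ofReal_sub_I_mul :
    Tendsto (fun τ : ℝ => I * τ / ((μ : ℂ) - I * τ)) atTop (𝓝 (-1)) := by
  have hzero : Tendsto (fun τ : ℝ => (μ : ℂ) / ((μ : ℂ) - I * τ)) atTop (𝓝 0) := by
    have hbound : Tendsto (fun τ : ℝ => |μ| / |τ|) atTop (𝓝 0) :=
      tendsto_const_nhds.div_atTop tendsto_abs_atTop_atTop
    refine squeeze_zero_norm' ?_ hbound
    filter_upwards [eventually_ne_atTop 0] with τ hτ
    exact norm_ofReal_div_ofReal_sub_I_mul_le μ hτ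
  have hsub := hzero.sub_const 1
  rw [zero_sub] at hsub
  refine hsub.congr' ?_
  filter_upwards [eventually_ne_atTop 0] with τ hτ
  rw [ofReal_div_ofReal_sub_I_mul μ hτ]
  ring

end Kernel

section Integral

variable (ν : Measure ℝ) [IsFiniteMeasure ν]

lemma integrable_I_mul_div_ofReal_sub_I_mul (τ : ℝ) :
    Integrable (fun μ : ℝ => I * τ / ((μ : ℂ) - I * τ)) ν :=
  Integrable.of_bound (Measurable.aestronglyMeasurable (by fun_prop)) 1
    (ae_of_all _ fun μ => norm_I_mul_div_ofReal_sub_I_mul_le_one μ τ)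

lemma integral_resolvent_split {τ : ℝ} (hτ : τ ≠ 0) {s : Set ℝ} (hs : MeasurableSet s) :
    -(∫ _μ in s, (1 : ℂ) ∂ν) + (∫ μ in s, (μ : ℂ) / ((μ : ℂ) - I * τ) ∂ν)
      + (∫ μ in sᶜ, I * τ / ((μ : ℂ) - I * τ) ∂ν)
      = ∫ μ, I * τ / ((μ : ℂ) - I * τ) ∂ν := by
  have hint := integrable_I_mul_div_ofReal_sub_I_mul ν τ
  simp_rw [ofReal_div_ofReal_sub_I_mul _ hτ]
  rw [integral_add (integrable_const _) hint.integrableOn, ← integral_add_compl hs hint]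
  ring

lemma tendsto_integral_I_mul_div_ofReal_sub_I_mul :
    Tendsto (fun τ : ℝ => ∫ μ, I * τ / ((μ : ℂ) - I * τ) ∂ν) atTop
      (𝓝 (-((ν Set.univ).toReal : ℂ))) := by
  have hlim := tendsto_integral_filter_of_dominated_convergence (fun _ => (1 : ℝ))
    (Eventually.of_forall fun τ => (integrable_I_mul_div_ofReal_sub_I_mul ν τ).aestronglyMeasurable)
    (Eventually.of_forall fun τ => ae_of_all _ fun μ => norm_I_mul_div_ofReal_sub_I_mul_le_one μ τ)
    (integrable_const _) (ae_of_all _ tendsto_I_mul_div_ofReal_sub_I_mul)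
  simpa [integral_const, Measure.real] using hlim

end Integral

/-- Scalar core of the resolvent-comparison lemma: a signed Stieltjes measure
`σ = ν₁ - ν₂` of finite total variation whose combined Cauchy-transform
expression is `o(1)` along `λ = iτ`, uniformly over large finite intervals,
has total mass zero: `∫_ℝ dσ = 0`. -/
theorem stmt_1
    (ν₁ ν₂ : Measure ℝ) [IsFiniteMeasure ν₁] [IsFiniteMeasure ν₂]
    (hsmall : ∀ ε > (0:ℝ), ∃ a b : ℝ, a ≤ b ∧
      ∀ δ > (0:ℝ), ∃ T : ℝ, ∀ τ ≥ T, ∀ a' b' : ℝ, a' ≤ a → b ≤ b' →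
        ‖(-((∫ _μ in Set.Icc a' b', (1:ℂ) ∂ν₁) - (∫ _μ in Set.Icc a' b', (1:ℂ) ∂ν₂))
          + ((∫ μ in Set.Icc a' b', (μ:ℂ) / ((μ:ℂ) - Complex.I * (τ:ℂ)) ∂ν₁)
             - (∫ μ in Set.Icc a' b', (μ:ℂ) / ((μ:ℂ) - Complex.I * (τ:ℂ)) ∂ν₂))
          + ((∫ μ in (Set.Icc a' b')ᶜ, (Complex.I * (τ:ℂ)) / ((μ:ℂ) - Complex.I * (τ:ℂ)) ∂ν₁)
             - (∫ μ in (Set.Icc a' b')ᶜ, (Complex.I * (τ:ℂ)) / ((μ:ℂ) - Complex.I * (τ:ℂ)) ∂ν₂)))‖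
          ≤ δ) :
    (ν₁ Set.univ).toReal = (ν₂ Set.univ).toReal := by
  obtain ⟨a, b, -, hab⟩ := hsmall 1 one_pos
  have hdiff : Tendsto (fun τ : ℝ => (∫ μ, I * τ / ((μ : ℂ) - I * τ) ∂ν₁)
      - ∫ μ, I * τ / ((μ : ℂ) - I * τ) ∂ν₂) atTop (𝓝 0) := by
    refine Metric.tendsto_atTop.mpr fun δ hδ => ?_
    obtain ⟨T, hT⟩ := hab (δ / 2) (half_pos hδ)
    refine ⟨max T 1, fun τ hτ => ?_⟩
    have hτ0 : τ ≠ 0 := (lt_of_lt_of_le one_pos (le_of_max_le_right hτ)).ne'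
    rw [dist_zero_right, ← integral_resolvent_split ν₁ hτ0 measurableSet_Icc,
      ← integral_resolvent_split ν₂ hτ0 measurableSet_Icc]
    calc _ = _ := by congr 1; ring
      _ ≤ δ / 2 := hT τ (le_of_max_le_left hτ) a b le_rfl le_rfl
      _ < δ := half_lt_self hδ
  have hmass := tendsto_nhds_unique ((tendsto_integral_I_mul_div_ofReal_sub_I_mul ν₁).sub
    (tendsto_integral_I_mul_div_ofReal_sub_I_mul ν₂)) hdiff
  exact_mod_cast neg_injective (sub_eq_zero.mp hmass)
end

section
/- Let Q be a bounded operator on a Hilbert space with Re Q = (Q + Q*)/2 boundedly invertible, and let X_λ(t) be the operator solution of the homogeneous canonical system (i/2)((Q(t)x)' + Q*(t)x') − H_λ(t)x = 0 with X_λ(0) = I, where H_λ(t)* = H_{λ̄}(t). Then for all t and all λ in the domain of analyticity, X_{λ̄}(t)* [Re Q(t)] X_λ(t) = G, where G = Re Q(0). -/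
open ContinuousLinearMap

/-!
Differentiating `X_{λ̄}(t)* (Re Q(t)) X_λ(t)` gives three terms. The canonical system for `X_λ`
solves for `(Re Q) X_λ'` and its adjoint for `X_{λ̄}` solves for `X_{λ̄}'* (Re Q)`, using
`H_{λ̄}* = H_λ`; substituting, the `H`-terms cancel and the `Q'`-terms cancel against
`X_{λ̄}* (Re Q') X_λ`. So the invariant has zero derivative and equals its value `Re Q(0)` at `0`.
-/

open Complex ComplexStarModule

section Algebra

variable {A : Type*} [Ring A] [StarRing A] [Algebra ℂ A] [StarModule ℂ A]

lemma realPart_coe_eq_half_smul (a : A) : (ℜ a : A) = ((1 : ℂ) / 2) • (a + star a) := by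
  rw [realPart_apply_coe, ← Complex.coe_smul]
  norm_num

lemma realPart_mul_eq_of_canonical {q q' x x' h : A}
    (hx : (I / 2) • (q' * x + q * x' + star q * x') = h * x) :
    (ℜ q : A) * x' = -(I • (h * x)) - ((1 : ℂ) / 2) • (q' * x) := by
  have hx' := congrArg (fun z => (-I) • z) hx
  simp only [smul_smul, show -I * (I / 2) = (1 : ℂ) / 2 by
    linear_combination (-(1 : ℂ) / 2) * I_mul_I, neg_smul] at hx'
  rw [realPart_coe_eq_half_smul, smul_mul_assoc, add_mul, ← hx']
  module

lemma star_mul_realPart_eq_of_canonical {q q' y y' h : A}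
    (hy : (I / 2) • (q' * y + q * y' + star q * y') = star h * y) :
    star y' * (ℜ q : A) = I • (star y * h) - ((1 : ℂ) / 2) • (star y * star q') := by
  have hy' := congrArg star (realPart_mul_eq_of_canonical hy)
  simp only [star_mul, star_sub, star_neg, star_smul, star_star, (ℜ q).prop.star_eq,
    show star I = -I from conj_I, show star ((1 : ℂ) / 2) = 1 / 2 by norm_num] at hy'
  rw [hy', neg_smul, neg_neg]

lemma star_mul_realPart_mul_deriv_eq_zero {q q' x x' y y' h : A}
    (hx : (I / 2) • (q' * x + q * x' + star q * x') = h * x)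
    (hy : (I / 2) • (q' * y + q * y' + star q * y') = star h * y) :
    star y' * ((ℜ q : A) * x) + star y * ((ℜ q' : A) * x + (ℜ q : A) * x') = 0 := by
  rw [← mul_assoc, star_mul_realPart_eq_of_canonical hy, realPart_mul_eq_of_canonical hx,
    realPart_coe_eq_half_smul q']
  simp only [smul_mul_assoc, mul_smul_comm, sub_mul, add_mul, mul_add, mul_sub, mul_neg,
    smul_add, mul_assoc]
  module

end Algebra

section Calculus

variable {A : Type*} [NormedRing A] [NormedAlgebra ℂ A] [StarRing A] [StarModule ℂ A]
  [ContinuousStar A]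

lemma HasDerivAt.realPart {f : ℝ → A} {f' : A} {t : ℝ} (hf : HasDerivAt f f' t) :
    HasDerivAt (fun s => (ℜ (f s) : A)) (ℜ f' : A) t := by
  simp only [realPart_apply_coe]
  exact (hf.add hf.star).const_smul _

theorem star_mul_realPart_mul_eq_of_canonical {Q Q' H X X' Y Y' : ℝ → A}
    (hQ : ∀ t, HasDerivAt Q (Q' t) t) (hX : ∀ t, HasDerivAt X (X' t) t)
    (hY : ∀ t, HasDerivAt Y (Y' t) t)
    (hXode : ∀ t, (I / 2) • (Q' t * X t + Q t * X' t + star (Q t) * X' t) = H t * X t)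
    (hYode : ∀ t, (I / 2) • (Q' t * Y t + Q t * Y' t + star (Q t) * Y' t) = star (H t) * Y t)
    (t : ℝ) :
    star (Y t) * ((ℜ (Q t) : A) * X t) = star (Y 0) * ((ℜ (Q 0) : A) * X 0) := by
  have hderiv : ∀ s, HasDerivAt (fun s => star (Y s) * ((ℜ (Q s) : A) * X s)) 0 s := fun s =>
    ((hY s).star.mul ((hQ s).realPart.mul (hX s))).congr_deriv
      (star_mul_realPart_mul_deriv_eq_zero (hXode s) (hYode s))
  exact is_const_of_deriv_eq_zero (fun s => (hderiv s).differentiableAt)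
    (fun s => (hderiv s).deriv) t 0

end Calculus

theorem stmt_7_general
    {H : Type*} [NormedAddCommGroup H] [InnerProductSpace ℂ H] [CompleteSpace H]
    (A : Set ℂ) (hAsym : ∀ l ∈ A, (starRingEnd ℂ) l ∈ A)
    (Q Q' : ℝ → H →L[ℂ] H)
    (hQderiv : ∀ t : ℝ, HasDerivAt Q (Q' t) t)
    (Hl : ℂ → ℝ → H →L[ℂ] H)
    (hHsym : ∀ l ∈ A, ∀ t : ℝ, ContinuousLinearMap.adjoint (Hl l t) = Hl ((starRingEnd ℂ) l) t)
    (X X' : ℂ → ℝ → H →L[ℂ] H)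
    (hXderiv : ∀ l ∈ A, ∀ t : ℝ, HasDerivAt (X l) (X' l t) t)
    (hX0 : ∀ l ∈ A, X l 0 = 1)
    (hode : ∀ l ∈ A, ∀ t : ℝ,
      (Complex.I / 2) • ((Q' t).comp (X l t) + (Q t).comp (X' l t)
          + (ContinuousLinearMap.adjoint (Q t)).comp (X' l t))
        = (Hl l t).comp (X l t)) :
    ∀ l ∈ A, ∀ t : ℝ,
      (ContinuousLinearMap.adjoint (X ((starRingEnd ℂ) l) t)).comp
          (((((1:ℂ)/2) • (Q t + ContinuousLinearMap.adjoint (Q t)))).comp (X l t))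
        = ((1:ℂ)/2) • (Q 0 + ContinuousLinearMap.adjoint (Q 0)) := by
  intro l hl t
  have hlb := hAsym l hl
  have hYode : ∀ s, (I / 2) • (Q' s * X (starRingEnd ℂ l) s + Q s * X' (starRingEnd ℂ l) s
      + star (Q s) * X' (starRingEnd ℂ l) s) = star (Hl l s) * X (starRingEnd ℂ l) s := by
    intro s
    rw [star_eq_adjoint (Hl l s), hHsym l hl]
    simpa only [← mul_def, ← star_eq_adjoint] using hode _ hlb s
  have key := star_mul_realPart_mul_eq_of_canonical hQderiv (hXderiv l hl) (hXderiv _ hlb)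
    (by simpa only [← mul_def, ← star_eq_adjoint] using hode l hl) hYode t
  simpa only [realPart_coe_eq_half_smul, hX0 l hl, hX0 _ hlb, star_one, one_mul, mul_one,
    mul_def, star_eq_adjoint] using key

/-- Constancy of the sesquilinear invariant `X_{λ̄}(t)* (Re Q(t)) X_λ(t) = Re Q(0)`
for the operator solution of the canonical system
`(i/2)((Q(t)x)' + Q*(t)x') − H_λ(t)x = 0`, `X_λ(0) = I`, where `H_λ(t)* = H_{λ̄}(t)`. -/
theorem stmt_7
    {H : Type*} [NormedAddCommGroup H] [InnerProductSpace ℂ H] [CompleteSpace H]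
    (A : Set ℂ) (hAsym : ∀ l ∈ A, (starRingEnd ℂ) l ∈ A)
    (Q Q' : ℝ → H →L[ℂ] H)
    (hQderiv : ∀ t : ℝ, HasDerivAt Q (Q' t) t)
    (hQinv : ∀ t : ℝ, IsUnit (((1:ℂ)/2) • (Q t + ContinuousLinearMap.adjoint (Q t))))
    (Hl : ℂ → ℝ → H →L[ℂ] H)
    (hHcont : ∀ l ∈ A, Continuous fun t => Hl l t)
    (hHsym : ∀ l ∈ A, ∀ t : ℝ, ContinuousLinearMap.adjoint (Hl l t) = Hl ((starRingEnd ℂ) l) t)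
    (X X' : ℂ → ℝ → H →L[ℂ] H)
    (hXderiv : ∀ l ∈ A, ∀ t : ℝ, HasDerivAt (X l) (X' l t) t)
    (hX0 : ∀ l ∈ A, X l 0 = 1)
    (hode : ∀ l ∈ A, ∀ t : ℝ,
      (Complex.I / 2) • ((Q' t).comp (X l t) + (Q t).comp (X' l t)
          + (ContinuousLinearMap.adjoint (Q t)).comp (X' l t))
        = (Hl l t).comp (X l t)) :
    ∀ l ∈ A, ∀ t : ℝ,
      (ContinuousLinearMap.adjoint (X ((starRingEnd ℂ) l) t)).comp
          (((((1:ℂ)/2) • (Q t + ContinuousLinearMap.adjoint (Q t)))).comp (X l t))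
        = ((1:ℂ)/2) • (Q 0 + ContinuousLinearMap.adjoint (Q 0)) :=
  stmt_7_general A hAsym Q Q' hQderiv Hl hHsym X X' hXderiv hX0 hode
end
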